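/- arXiv:2508.18895 — 5 statements merged into one kernel-verified Lean document; each statement's English description precedes it below -/
import Mathlib

section
/- Let K be a field and x a unit in K with x² ≠ 1. Define the quantum integer [k] = (x^k - x^{-k})/(x - x^{-1}) for k ∈ ℕ. Then for all m, n ∈ ℕ, [m+1]·[n+1] = Σ [k+1], where the sum runs over k with |m-n| ≤ k ≤ m+n and k ≡ m+n (mod 2). -/
/-! Clearing the denominators `x - x⁻¹`, the identity becomes, for `y = x⁻¹` and `n = m + d`,
`(x^(m+1) - y^(m+1)) (x^(n+1) - y^(n+1)) = (x - y) Σ_{j ≤ m} (x^(d+2j+1) - y^(d+2j+1))`.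
This holds whenever `x y = 1` by induction on `m`: the new summand only replaces the outer
powers of the product, because the cross terms `x^a y^(a+d)` all equal `y^d`. -/

/-- The quantum integer [k] = (x^k - x^{-k})/(x - x^{-1}). -/
def qint {K : Type*} [Field K] (x : K) (k : ℕ) : K :=
  (x ^ k - x⁻¹ ^ k) / (x - x⁻¹)

theorem pow_sub_pow_mul_pow_sub_pow_of_mul_eq_one {R : Type*} [CommRing R] {x y : R}
    (hxy : x * y = 1) (m d : ℕ) :
    (x ^ (m + 1) - y ^ (m + 1)) * (x ^ (m + d + 1) - y ^ (m + d + 1)) =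
      (x - y) * ∑ j ∈ Finset.range (m + 1), (x ^ (d + 2 * j + 1) - y ^ (d + 2 * j + 1)) := by
  induction m with
  | zero => simp
  | succ m ih =>
    rw [Finset.sum_range_succ, mul_add, ← ih]
    linear_combination
      (x ^ (d + 2 * m + 2) + y ^ (d + 2 * m + 2)
        - x ^ (m + 1) * y ^ (m + d + 1) - y ^ (m + 1) * x ^ (m + d + 1)) * hxy

theorem qint_succ_mul_qint_add_succ {K : Type*} [Field K] (x : K) (m d : ℕ) :
    qint x (m + 1) * qint x (m + d + 1) =
      ∑ j ∈ Finset.range (m + 1), qint x (d + 2 * j + 1) := by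
  by_cases hd : x - x⁻¹ = 0
  · simp [qint, hd]
  have hx : x ≠ 0 := by
    rintro rfl
    simp at hd
  simp only [qint, ← Finset.sum_div, div_mul_div_comm,
    pow_sub_pow_mul_pow_sub_pow_of_mul_eq_one (mul_inv_cancel₀ hx)]
  field_simp

theorem filter_Icc_mod_two_eq_image_range (m d : ℕ) :
    (Finset.Icc d (m + (m + d))).filter (fun k => k % 2 = (m + (m + d)) % 2) =
      (Finset.range (m + 1)).image (fun j => d + 2 * j) := by
  ext k
  simp only [Finset.mem_filter, Finset.mem_Icc, Finset.mem_image, Finset.mem_range]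
  constructor
  · rintro ⟨⟨hdk, hkm⟩, hk⟩
    exact ⟨(k - d) / 2, by omega, by omega⟩
  · rintro ⟨j, hj, rfl⟩
    omega

theorem stmt_12_general {K : Type*} [Field K] (x : K)
    (m n : ℕ) :
    qint x (m + 1) * qint x (n + 1) =
      ∑ k ∈ (Finset.Icc (max m n - min m n) (m + n)).filter
        (fun k => k % 2 = (m + n) % 2), qint x (k + 1) := by
  wlog hmn : m ≤ n generalizing m n
  · rw [mul_comm, add_comm m n, max_comm, min_comm]
    exact this n m (by omega)
  obtain ⟨d, rfl⟩ := Nat.exists_eq_add_of_le hmn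
  rw [max_eq_right hmn, min_eq_left hmn, Nat.add_sub_cancel_left,
    filter_Icc_mod_two_eq_image_range,
    Finset.sum_image (by intro a _ b _ hab; simp only at hab; omega)]
  exact qint_succ_mul_qint_add_succ x m d

theorem stmt_12 {K : Type*} [Field K] (x : K) (hx : IsUnit x) (hx2 : x ^ 2 ≠ 1)
    (m n : ℕ) :
    qint x (m + 1) * qint x (n + 1) =
      ∑ k ∈ (Finset.Icc (max m n - min m n) (m + n)).filter
        (fun k => k % 2 = (m + n) % 2), qint x (k + 1) :=
  stmt_12_general x m n
end

section
/- Let ε ∈ {1, -1} and let F = [[a, b], [c, d]] be an invertible 2×2 complex matrix satisfying ε·[[a, -b], [-c, d]] = F². Then a ≠ 0. -/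
theorem stmt_13 (ε : ℂ) (hε : ε = 1 ∨ ε = -1) (a b c d : ℂ)
    (hinv : IsUnit (!![a, b; c, d] : Matrix (Fin 2) (Fin 2) ℂ))
    (hhex : ε • (!![a, -b; -c, d] : Matrix (Fin 2) (Fin 2) ℂ)
      = !![a, b; c, d] * !![a, b; c, d]) :
    a ≠ 0 := by
  intro ha
  have hdet : (!![a, b; c, d] : Matrix (Fin 2) (Fin 2) ℂ).det ≠ 0 := by
    exact_mod_cast ((Matrix.isUnit_iff_isUnit_det _).mp hinv).ne_zero
  rw [Matrix.det_fin_two_of] at hdet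
  have h00 := congrArg (fun M => M 0 0) hhex
  simp [Matrix.mul_apply, Fin.sum_univ_two, ha] at h00
  rcases h00 with h | h <;> simp [ha, h] at hdet
end

section
/- Let ε ∈ {1, -1} and let F = [[a, b], [c, d]] be an invertible 2×2 complex matrix satisfying ε·[[a, -b], [-c, d]] = F². Then a = d. -/
theorem stmt_15 (ε : ℂ) (hε : ε = 1 ∨ ε = -1) (a b c d : ℂ)
    (hinv : IsUnit (!![a, b; c, d] : Matrix (Fin 2) (Fin 2) ℂ))
    (hhex : ε • (!![a, -b; -c, d] : Matrix (Fin 2) (Fin 2) ℂ)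
      = !![a, b; c, d] * !![a, b; c, d]) :
    a = d := by
  have hεne : ε ≠ 0 := by rcases hε with h | h <;> simp [h]
  have h00 : ε * a = a * a + b * c := by
    have := congrFun (congrFun hhex 0) 0
    simpa [Matrix.mul_apply, Fin.sum_univ_two] using this
  have h01 : ε * (-b) = a * b + b * d := by
    have := congrFun (congrFun hhex 0) 1
    simpa [Matrix.mul_apply, Fin.sum_univ_two] using this
  have h11 : ε * d = c * b + d * d := by
    have := congrFun (congrFun hhex 1) 1
    simpa [Matrix.mul_apply, Fin.sum_univ_two] using this
  by_contra hne
  have had : ε = a + d :=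
    mul_right_cancel₀ (sub_ne_zero.mpr hne) (by linear_combination h00 - h11)
  have h2ε : (2 : ℂ) * ε ≠ 0 := by
    simp [hεne]
  have hb : b = 0 := by
    have h2 : (2 * ε) * b = 0 := by linear_combination -h01 + b * had
    exact (mul_eq_zero.mp h2).resolve_left h2ε
  have hdet : a * d - b * c ≠ 0 := by
    have := (Matrix.isUnit_iff_isUnit_det _).mp hinv
    rw [Matrix.det_fin_two_of] at this
    exact this.ne_zero
  have hane : a ≠ 0 := fun h => hdet (by simp [h, hb])
  have hdne : d ≠ 0 := fun h => hdet (by simp [h, hb])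
  have ha : ε = a := mul_right_cancel₀ hane (by linear_combination h00 + c * hb)
  have hd : ε = d := mul_right_cancel₀ hdne (by linear_combination h11 + c * hb)
  exact hne (ha ▸ hd)
end

section
/- Let ε ∈ {1, -1}. The invertible 2×2 complex matrices F = [[a, b], [c, d]] satisfying ε·[[a, -b], [-c, d]] = F² are exactly: F = ε·I (the identity times ε), or F = [[-ε/2, t], [-3/(4t), -ε/2]] for some nonzero t ∈ ℂ. -/
/-!
Write `F = !![a, b; c, d]`. The off-diagonal entries of `ε σFσ = F²` read `-ε b = (a + d) b` and
`-ε c = (a + d) c`. If `b = c = 0`, then `a² = ε a` and `d² = ε d` with `a d ≠ 0`, so `F = ε`; the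
case `b = 0 ≠ c` is impossible, since then again `a = d = ε` and `-ε = a + d = 2ε`. If `b ≠ 0`,
the trace of `F` is `-ε`, the difference of the diagonal entries gives `2ε (a - d) = 0`, so
`a = d = -ε/2`, and the `(0,0)` entry then forces `b c = -3/4`.
-/

section
variable {K : Type*} [Field K] {ε a b c d : K}

lemma eq_sign_of_upper_eq_zero (hε : ε * ε = 1) (h3 : (3 : K) ≠ 0) (hb : b = 0)
    (hdet : a * d - b * c ≠ 0) (e00 : ε * a = a * a + b * c) (e10 : -(ε * c) = c * a + d * c)
    (e11 : ε * d = c * b + d * d) :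
    a = ε ∧ c = 0 ∧ d = ε := by
  subst hb
  have ha : a ≠ 0 := left_ne_zero_of_mul (by simpa using hdet)
  have hd : d ≠ 0 := right_ne_zero_of_mul (by simpa using hdet)
  obtain rfl : a = ε := mul_left_cancel₀ ha (by linear_combination -e00)
  obtain rfl : d = a := mul_left_cancel₀ hd (by linear_combination -e11)
  have h3dc : (3 * d) * c = 0 := by linear_combination -e10
  exact ⟨rfl, (mul_eq_zero.1 h3dc).resolve_left (mul_ne_zero h3 ha), rfl⟩

lemma eq_neg_half_of_upper_ne_zero (hε : ε * ε = 1) (h2 : (2 : K) ≠ 0) (hb : b ≠ 0)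
    (e00 : ε * a = a * a + b * c) (e01 : -(ε * b) = a * b + b * d)
    (e11 : ε * d = c * b + d * d) :
    a = -ε / 2 ∧ d = -ε / 2 ∧ 4 * (b * c) = -3 := by
  have htr : a + d = -ε := by
    have : b * (a + d + ε) = 0 := by linear_combination -e01
    linear_combination (mul_eq_zero.1 this).resolve_left hb
  have had : a = d := by
    have : (2 * ε) * (a - d) = 0 := by linear_combination e00 - e11 + (a - d) * htr
    linear_combination
      (mul_eq_zero.1 this).resolve_left (mul_ne_zero h2 (left_ne_zero_of_mul_eq_one hε))
  have h2a : 2 * a = -ε := by linear_combination htr + had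
  have ha : a = -ε / 2 := by rw [eq_div_iff h2, mul_comm, h2a]
  refine ⟨ha, had ▸ ha, ?_⟩
  linear_combination -4 * e00 + (3 * ε - 2 * a) * h2a - 3 * hε

theorem Matrix.fin_two_smul_negOffDiag_eq_mul_self_iff (hε : ε * ε = 1) (h2 : (2 : K) ≠ 0)
    (h3 : (3 : K) ≠ 0) (hdet : a * d - b * c ≠ 0) :
    ε • !![a, -b; -c, d] = !![a, b; c, d] * !![a, b; c, d] ↔
      !![a, b; c, d] = ε • 1 ∨ ∃ t : K, t ≠ 0 ∧ !![a, b; c, d] = !![-ε / 2, t; -3 / (4 * t), -ε / 2] := by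
  have h4 : (4 : K) ≠ 0 := by simpa [show (4 : K) = 2 * 2 by norm_num] using mul_ne_zero h2 h2
  simp only [Matrix.smul_of, Matrix.mul_fin_two, Matrix.one_fin_two, Matrix.smul_cons, smul_eq_mul,
    mul_neg, Matrix.smul_empty, EmbeddingLike.apply_eq_iff_eq, Matrix.vecCons_inj, and_true,
    and_assoc, mul_one, mul_zero, ne_eq, existsAndEq, true_and]
  constructor
  · rintro ⟨e00, e01, e10, e11⟩
    by_cases hb : b = 0
    · obtain ⟨ha, hc, hd⟩ := eq_sign_of_upper_eq_zero hε h3 hb hdet e00 e10 e11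
      exact Or.inl ⟨ha, hb, hc, hd⟩
    · obtain ⟨ha, hd, hbc⟩ := eq_neg_half_of_upper_ne_zero hε h2 hb e00 e01 e11
      refine Or.inr ⟨hb, ha, ?_, hd⟩
      rw [eq_div_iff (mul_ne_zero h4 hb)]
      linear_combination hbc
  · rintro (⟨rfl, rfl, rfl, rfl⟩ | ⟨hb, rfl, rfl, rfl⟩)
    · simp
    · field_simp
      refine ⟨?_, by ring, by ring, ?_⟩ <;> linear_combination -12 * hε
end

theorem stmt_16 (ε : ℂ) (hε : ε = 1 ∨ ε = -1)
    (F : Matrix (Fin 2) (Fin 2) ℂ) (hF : IsUnit F) :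
    (ε • (!![F 0 0, -(F 0 1); -(F 1 0), F 1 1] : Matrix (Fin 2) (Fin 2) ℂ) = F * F)
    ↔ (F = ε • (1 : Matrix (Fin 2) (Fin 2) ℂ)
        ∨ ∃ t : ℂ, t ≠ 0 ∧ F = !![-ε / 2, t; -3 / (4 * t), -ε / 2]) := by
  obtain ⟨a, b, c, d, rfl⟩ : ∃ a b c d, F = !![a, b; c, d] := ⟨_, _, _, _, F.eta_fin_two⟩
  have hdet : a * d - b * c ≠ 0 := by
    simpa [Matrix.det_fin_two_of] using ((Matrix.isUnit_iff_isUnit_det _).1 hF).ne_zero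
  have hε1 : ε * ε = 1 := by rcases hε with rfl | rfl <;> norm_num
  simpa using Matrix.fin_two_smul_negOffDiag_eq_mul_self_iff hε1 two_ne_zero three_ne_zero hdet
end

section
/- Let C be a category, A and A' objects, and Φ : A' → A a morphism such that postcomposition with Φ gives a bijection Hom(A', A') → Hom(A', A), and precomposition with Φ gives a bijection Hom(A, A) → Hom(A', A). For each g : A → A let g' : A' → A' be the unique morphism with Φ ∘ g' = g ∘ Φ. Then g is an isomorphism if and only if g' is an isomorphism, and the assignment g ↦ g' restricts to a group isomorphism Aut(A) ≅ Aut(A'). -/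
open CategoryTheory

theorem stmt_19 {C : Type*} [Category C] (A A' : C) (Φ : A' ⟶ A)
    (hpost : Function.Bijective (fun h : A' ⟶ A' => h ≫ Φ))
    (hpre : Function.Bijective (fun h : A ⟶ A => Φ ≫ h)) :
    (∀ (g : A ⟶ A) (g' : A' ⟶ A'), g' ≫ Φ = Φ ≫ g → (IsIso g ↔ IsIso g')) ∧
    ∃ e : Aut A ≃* Aut A', ∀ g : Aut A, (e g).hom ≫ Φ = Φ ≫ g.hom := by
  obtain ⟨hpostInj, hpostSurj⟩ := hpost
  obtain ⟨hpreInj, hpreSurj⟩ := hpre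
  choose T hT using fun g : A ⟶ A => hpostSurj (Φ ≫ g)
  choose S hS using fun g' : A' ⟶ A' => hpreSurj (g' ≫ Φ)
  simp only at hT hS
  have Tmul : ∀ g₁ g₂ : A ⟶ A, T (g₁ ≫ g₂) = T g₁ ≫ T g₂ := by
    intro g₁ g₂
    apply hpostInj
    show T (g₁ ≫ g₂) ≫ Φ = (T g₁ ≫ T g₂) ≫ Φ
    rw [hT]
    conv_rhs => rw [Category.assoc, hT, ← Category.assoc, hT, Category.assoc]
  have Tone : T (𝟙 A) = 𝟙 A' := by
    apply hpostInj
    simp [hT]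
  have hIso : ∀ (g : A ⟶ A) (g' : A' ⟶ A'), g' ≫ Φ = Φ ≫ g → (IsIso g ↔ IsIso g') := by
    intro g g' hgg'
    have hg' : g' = T g := hpostInj (by simp [hT, hgg'])
    subst hg'
    constructor
    · intro hg
      exact ⟨T (inv g), by rw [← Tmul, IsIso.hom_inv_id, Tone],
        by rw [← Tmul, IsIso.inv_hom_id, Tone]⟩
    · intro hg'
      refine ⟨S (inv (T g)), ?_, ?_⟩
      · apply hpreInj
        simp only [← Category.assoc, ← hgg']
        simp [Category.assoc, hS]
      · apply hpreInj
        simp only [← Category.assoc, hS]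
        simp [Category.assoc, ← hgg']
  refine ⟨hIso, ?_⟩
  have TS : ∀ g' : A' ⟶ A', T (S g') = g' := by
    intro g'
    apply hpostInj
    simp [hT, hS]
  have ST : ∀ g : A ⟶ A, S (T g) = g := by
    intro g
    apply hpreInj
    simp [hS, hT]
  refine ⟨{ toFun := fun g => ⟨T g.hom, T g.inv,
              by rw [← Tmul, g.hom_inv_id, Tone], by rw [← Tmul, g.inv_hom_id, Tone]⟩,
            invFun := fun g' => ⟨S g'.hom, S g'.inv,
              by apply hpreInj
                 show Φ ≫ S g'.hom ≫ S g'.inv = Φ ≫ 𝟙 A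
                 rw [← Category.assoc, hS, Category.assoc, hS, ← Category.assoc,
                   g'.hom_inv_id, Category.id_comp, Category.comp_id],
              by apply hpreInj
                 show Φ ≫ S g'.inv ≫ S g'.hom = Φ ≫ 𝟙 A
                 rw [← Category.assoc, hS, Category.assoc, hS, ← Category.assoc,
                   g'.inv_hom_id, Category.id_comp, Category.comp_id]⟩,
            left_inv := fun g => by apply Iso.ext; exact ST g.hom,
            right_inv := fun g' => by apply Iso.ext; exact TS g'.hom,
            map_mul' := fun g h => by apply Iso.ext; exact Tmul h.hom g.hom },
        fun g => hT g.hom⟩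
end
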